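/- There exists a universal constant C₀ > 0 such that the following holds. Consider the mixture model with mixing weight p ∈ (0,1), and suppose 𝒫₊ satisfies the positive-class regularity assumption with constants λ₀, r₀, C₊ and support 𝒳₊ having connected components 𝒳_{+,1},…,𝒳_{+,c}. Let 0 < δ < 1, let (Y₁,Z₁),…,(Y_n,Z_n) be i.i.d. labeled samples, let X₊ := {Z_j : Y_j = +} be the set of positive sample points, and set ε := 3·(C₀·D·log(2/δ)·log(n) / (p·C₊·λ₀·v_D·n))^{1/D}. If n is large enough that ε ≤ r₀, then with probability at least 1 − δ: for every i ∈ [c] and every pair of points x, x' ∈ 𝒳_{+,i} ∩ X₊, there is a finite sequence x = z₀, z₁, …, z_k = x' of points of X₊ with ‖z_j − z_{j+1}‖ ≤ ε for all j (i.e., 𝒳_{+,i} ∩ X₊ lies in a single connected component of the ε-neighborhood graph on X₊). -/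

import Mathlib

/-!
Put `ρ = ε / 3` and `κ = λ₀ C₊ v_D`, and let `Y` be a maximal `ρ/3`-separated subset of `𝒳₊`.
The balls of radius `ρ/6` around `Y` are disjoint and each has `𝒫₊`-mass at least `κ (ρ/6)^D`,
so `#Y ≤ 6^D / (κ ρ^D)`. A given ball `B(y, ρ)`, `y ∈ Y`, misses all positive samples with
probability at most `(1 - p κ ρ^D)^n ≤ exp (-C₀ D log (2/δ) log n)`, and the union bound over `Y`
is at most `δ` once `C₀ = 10`. Outside this event every point of `𝒳₊` lies within `4ρ/3` of a
positive sample, so two points of a component closer than `ρ/3` have positive samples within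
`4ρ/3` of them that are `ε`-close, and connectedness of the component propagates this into an
`ε`-chain.
-/

open MeasureTheory Metric

/-- Labels are `Bool`, with `true` for the positive class. -/
noncomputable def mixture (D : ℕ) (p : ℝ)
    (Pp Pm : Measure (EuclideanSpace ℝ (Fin D))) :
    Measure (Bool × EuclideanSpace ℝ (Fin D)) :=
  ENNReal.ofReal p • (Measure.dirac true).prod Pp
    + ENNReal.ofReal (1 - p) • (Measure.dirac false).prod Pm

open Set Relation
open scoped NNReal ENNReal

theorem Relation.ReflTransGen.exists_seq {α : Type*} {r : α → α → Prop} {a b : α}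
    (h : ReflTransGen r a b) :
    ∃ (k : ℕ) (z : ℕ → α), z 0 = a ∧ z k = b ∧ ∀ l < k, r (z l) (z (l + 1)) := by
  induction h using Relation.ReflTransGen.head_induction_on with
  | refl => exact ⟨0, fun _ => b, rfl, rfl, by simp⟩
  | @head a c hac _ ih =>
    obtain ⟨k, z, rfl, rfl, hz⟩ := ih
    refine ⟨k + 1, fun | 0 => a | l + 1 => z l, rfl, rfl, fun l hl => ?_⟩
    rcases l with _ | l
    · exact hac
    · exact hz l (by omega)

section ChainJoined

variable {X : Type*} [PseudoMetricSpace X]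

def ChainJoinedIn (T : Set X) (ε : ℝ) (x y : X) : Prop :=
  ∃ (k : ℕ) (z : ℕ → X), z 0 = x ∧ z k = y ∧ (∀ l ≤ k, z l ∈ T) ∧
    ∀ l < k, dist (z l) (z (l + 1)) ≤ ε

theorem ChainJoinedIn.refl {T : Set X} {x : X} (hx : x ∈ T) (ε : ℝ) : ChainJoinedIn T ε x x :=
  ⟨0, fun _ => x, rfl, rfl, fun _ _ => hx, fun _ h => absurd h (Nat.not_lt_zero _)⟩

theorem chainJoinedIn_of_reflTransGen {T : Set X} {ε : ℝ} {a b : T}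
    (h : ReflTransGen (fun s t : T => dist s t ≤ ε) a b) : ChainJoinedIn T ε a b := by
  obtain ⟨k, z, rfl, rfl, hz⟩ := h.exists_seq
  exact ⟨k, fun l => z l, rfl, rfl, fun l _ => (z l).2, hz⟩

/-- Points of `T` attached to points of `S` closer than `ε - 2r` are `ε`-close, and
preconnectedness propagates this. -/
theorem IsPreconnected.reflTransGen_dist_le {S T : Set X} (hS : IsPreconnected S) {r ε : ℝ}
    (hST : ∀ a ∈ S, ∃ b ∈ T, dist a b ≤ r) (hε : 2 * r < ε) {a b : X} (ha : a ∈ S)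
    (hb : b ∈ S) {a' b' : T} (haa' : dist a a' ≤ r) (hbb' : dist b b' ≤ r) :
    ReflTransGen (fun s t : T => dist s t ≤ ε) a' b' := by
  let P : X → X → Prop := fun a b => ∀ a' b' : T, dist a a' ≤ r → dist b b' ≤ r →
    ReflTransGen (fun s t : T => dist s t ≤ ε) a' b'
  have hclose : ∀ a b, dist a b < ε - 2 * r → P a b := fun a b hab a' b' ha' hb' =>
    ReflTransGen.single <| calc
      dist (a' : X) b' ≤ dist (a' : X) a + dist a b + dist b b' := dist_triangle4 _ _ _ _
      _ ≤ ε := by rw [dist_comm] at ha'; linarith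
  refine hS.induction₂' P (fun x _ => ?_) (fun x y z _ hy _ hxy hyz => ?_) ha hb a' b' haa' hbb'
  · filter_upwards [nhdsWithin_le_nhds (ball_mem_nhds x (by linarith : 0 < ε - 2 * r))]
      with y hy
    exact ⟨hclose x y (by rwa [dist_comm]), hclose y x hy⟩
  · intro a' c' ha' hc'
    obtain ⟨b', hb'T, hb'⟩ := hST y hy
    exact (hxy a' ⟨b', hb'T⟩ ha' hb').trans (hyz ⟨b', hb'T⟩ c' hb' hc')

theorem IsPreconnected.chainJoinedIn {S T : Set X} (hS : IsPreconnected S) {r ε : ℝ}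
    (hr : 0 ≤ r) (hST : ∀ a ∈ S, ∃ b ∈ T, dist a b ≤ r) (hε : 2 * r < ε) {x y : X}
    (hx : x ∈ S) (hxT : x ∈ T) (hy : y ∈ S) (hyT : y ∈ T) : ChainJoinedIn T ε x y :=
  chainJoinedIn_of_reflTransGen (a := ⟨x, hxT⟩) (b := ⟨y, hyT⟩) <|
    hS.reflTransGen_dist_le hST hε hx hy (by simpa using hr) (by simpa using hr)

end ChainJoined

theorem Metric.packingNumber_le_of_forall_finset {X : Type*} [PseudoEMetricSpace X] {ε : ℝ≥0}
    {A : Set X} {K : ℕ}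
    (h : ∀ F : Finset X, ↑F ⊆ A → IsSeparated (ε : ℝ≥0∞) (F : Set X) → F.card ≤ K) :
    packingNumber ε A ≤ K := by
  refine iSup₂_le fun C hCA => iSup_le fun hC => ?_
  by_contra! hlt
  obtain ⟨C', hC'C, hC'⟩ := Set.exists_subset_encard_eq (Order.add_one_le_of_lt hlt)
  have hfin : C'.Finite := Set.finite_of_encard_eq_coe hC'
  have hcard := h hfin.toFinset (by simpa using hC'C.trans hCA) (by simpa using hC.subset hC'C)
  rw [hfin.encard_eq_coe_toFinset_card] at hC'
  norm_cast at hC'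
  omega

section Packing

variable {X : Type*} [PseudoMetricSpace X] [MeasurableSpace X] [OpensMeasurableSpace X]

theorem Metric.IsSeparated.card_mul_le_measure_univ (μ : Measure X) {F : Finset X} {t : ℝ≥0}
    (hF : IsSeparated (t : ℝ≥0∞) (F : Set X)) {m : ℝ≥0∞}
    (hm : ∀ y ∈ F, m ≤ μ (closedBall y (t / 2))) : F.card * m ≤ μ univ := by
  have hdisj : (F : Set X).Pairwise (Function.onFun (AEDisjoint μ) fun y => closedBall y (t / 2)) :=
    fun a ha b hb hab => Disjoint.aedisjoint <| closedBall_disjoint_closedBall <| by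
      have : (t : ℝ≥0∞) < edist a b := hF ha hb hab
      rw [edist_dist, ← ENNReal.ofReal_coe_nnreal, ENNReal.ofReal_lt_ofReal_iff'] at this
      linarith [this.1]
  calc F.card * m = ∑ _y ∈ F, m := by simp
    _ ≤ ∑ y ∈ F, μ (closedBall y (t / 2)) := Finset.sum_le_sum hm
    _ ≤ μ univ :=
        sum_measure_le_measure_univ (fun _ _ => measurableSet_closedBall.nullMeasurableSet) hdisj

theorem exists_finset_subset_forall_dist_le_card_mul_le (μ : Measure X) [IsProbabilityMeasure μ]
    {A : Set X} {t m : ℝ} (ht : 0 ≤ t) (hm : 0 < m)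
    (hball : ∀ y ∈ A, ENNReal.ofReal m ≤ μ (closedBall y (t / 2))) :
    ∃ Y : Finset X, ↑Y ⊆ A ∧ (∀ x ∈ A, ∃ y ∈ Y, dist x y ≤ t) ∧ Y.card * m ≤ 1 := by
  let τ : ℝ≥0 := ⟨t, ht⟩
  have hcard : ∀ F : Finset X, ↑F ⊆ A → IsSeparated (τ : ℝ≥0∞) (F : Set X) →
      (F.card : ℝ) * m ≤ 1 := fun F hFA hF => by
    have := hF.card_mul_le_measure_univ μ fun y hy => hball y (hFA hy)
    rwa [measure_univ, ← ENNReal.ofReal_natCast, ← ENNReal.ofReal_mul (by positivity),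
      ENNReal.ofReal_le_one] at this
  have hpack : packingNumber τ A ≠ ⊤ := ne_top_of_le_ne_top (ENat.natCast_ne_top ⌊1 / m⌋₊) <|
    packingNumber_le_of_forall_finset fun F hFA hF =>
      Nat.le_floor <| (le_div_iff₀ hm).2 (hcard F hFA hF)
  have hfin : (maximalSeparatedSet τ A).Finite := by
    rw [← Set.encard_ne_top_iff, encard_maximalSeparatedSet hpack]
    exact hpack
  refine ⟨hfin.toFinset, by simpa using maximalSeparatedSet_subset, fun x hx => ?_,
    hcard _ (by simpa using maximalSeparatedSet_subset)
      (by simpa using isSeparated_maximalSeparatedSet)⟩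
  obtain ⟨y, hy, hxy⟩ := mem_iUnion₂.1 (isCover_iff_subset_iUnion_closedBall.1
    (isCover_maximalSeparatedSet hpack) hx)
  exact ⟨y, hfin.mem_toFinset.2 hy, hxy⟩

end Packing

theorem measure_pi_forall_exists_mem_ge {α ι : Type*} [MeasurableSpace α] (μ : Measure α)
    [IsProbabilityMeasure μ] (s : Finset ι) {S : ι → Set α} (hS : ∀ i, MeasurableSet (S i))
    {q : ℝ} (hq0 : 0 ≤ q) (hq : ∀ i ∈ s, ENNReal.ofReal q ≤ μ (S i)) (n : ℕ) :
    ENNReal.ofReal (1 - s.card * Real.exp (-(n * q))) ≤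
      Measure.pi (fun _ : Fin n => μ) {ω | ∀ i ∈ s, ∃ j, ω j ∈ S i} := by
  set E := {ω : Fin n → α | ∀ i ∈ s, ∃ j, ω j ∈ S i}
  have hmiss : ∀ i ∈ s, Measure.pi (fun _ : Fin n => μ) (univ.pi fun _ => (S i)ᶜ) ≤
      ENNReal.ofReal (Real.exp (-(n * q))) := fun i hi => by
    rw [Measure.pi_pi, Finset.prod_const, Finset.card_univ, Fintype.card_fin,
      prob_compl_eq_one_sub (hS i), neg_mul_eq_mul_neg, Real.exp_nat_mul,
      ENNReal.ofReal_pow (Real.exp_pos _).le]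
    gcongr
    calc 1 - μ (S i) ≤ 1 - ENNReal.ofReal q := tsub_le_tsub_left (hq i hi) 1
      _ = ENNReal.ofReal (1 - q) := by rw [ENNReal.ofReal_sub _ hq0, ENNReal.ofReal_one]
      _ ≤ ENNReal.ofReal (Real.exp (-q)) := by
        gcongr; linarith [Real.add_one_le_exp (-q)]
  have hcompl : Eᶜ = ⋃ i ∈ s, univ.pi fun _ => (S i)ᶜ := by
    ext ω; simp [E]
  calc ENNReal.ofReal (1 - s.card * Real.exp (-(n * q)))
      = 1 - s.card * ENNReal.ofReal (Real.exp (-(n * q))) := by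
        rw [ENNReal.ofReal_sub _ (by positivity), ENNReal.ofReal_one,
          ENNReal.ofReal_mul (by positivity), ENNReal.ofReal_natCast]
    _ ≤ 1 - Measure.pi (fun _ : Fin n => μ) Eᶜ := by
        gcongr
        rw [hcompl]
        refine (measure_biUnion_finset_le s _).trans ?_
        simpa using Finset.sum_le_sum hmiss
    _ ≤ Measure.pi (fun _ : Fin n => μ) E := by
        rw [tsub_le_iff_right, ← measure_univ (μ := Measure.pi fun _ : Fin n => μ)]
        exact measure_univ_le_add_compl E

section Mixture

variable {D : ℕ} {p : ℝ} {Pp Pm : Measure (EuclideanSpace ℝ (Fin D))}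

theorem isProbabilityMeasure_mixture (hp0 : 0 ≤ p) (hp1 : p ≤ 1) [IsProbabilityMeasure Pp]
    [IsProbabilityMeasure Pm] : IsProbabilityMeasure (mixture D p Pp Pm) := by
  constructor
  simp [mixture, ← ENNReal.ofReal_add hp0 (sub_nonneg.2 hp1)]

theorem mixture_singleton_true_prod [SFinite Pp] [SFinite Pm]
    (B : Set (EuclideanSpace ℝ (Fin D))) :
    mixture D p Pp Pm ({true} ×ˢ B) = ENNReal.ofReal p * Pp B := by
  simp [mixture, Measure.prod_prod]

end Mixture

theorem mul_measure_inter_le_withDensity_apply {α : Type*} [MeasurableSpace α] {μ : Measure α}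
    {f : α → ℝ≥0∞} {s B : Set α} {c : ℝ≥0∞} (hs : MeasurableSet s) (hB : MeasurableSet B)
    (hf : ∀ x ∈ s, c ≤ f x) : c * μ (B ∩ s) ≤ μ.withDensity f B :=
  calc c * μ (B ∩ s) = ∫⁻ _ in B ∩ s, c ∂μ := (setLIntegral_const _ _).symm
    _ ≤ ∫⁻ x in B ∩ s, f x ∂μ := setLIntegral_mono' (hB.inter hs) fun x hx => hf x hx.2
    _ ≤ ∫⁻ x in B, f x ∂μ := lintegral_mono_set inter_subset_left
    _ = μ.withDensity f B := (withDensity_apply f hB).symm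

theorem ofReal_mul_pow_le_withDensity_closedBall {E : Type*} [NormedAddCommGroup E]
    [NormedSpace ℝ E] [MeasurableSpace E] [BorelSpace E] [FiniteDimensional ℝ E]
    (μ : Measure E) [μ.IsAddHaarMeasure] {f : E → ℝ≥0∞} {s : Set E} (hs : MeasurableSet s)
    {lam C r₀ : ℝ} (hlam : 0 ≤ lam) (hC : 0 ≤ C) (hf : ∀ x ∈ s, ENNReal.ofReal lam ≤ f x)
    (hreg : ∀ x ∈ s, ∀ r : ℝ, 0 < r → r < r₀ →
      ENNReal.ofReal C * μ (closedBall x r) ≤ μ (closedBall x r ∩ s)) :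
    ∀ y ∈ s, ∀ r : ℝ, 0 < r → r < r₀ →
      ENNReal.ofReal (lam * C * (μ (closedBall 0 1)).toReal * r ^ Module.finrank ℝ E) ≤
        μ.withDensity f (closedBall y r) := fun y hy r hr hrr₀ =>
  calc ENNReal.ofReal (lam * C * (μ (closedBall 0 1)).toReal * r ^ Module.finrank ℝ E)
      = ENNReal.ofReal lam * (ENNReal.ofReal C * μ (closedBall y r)) := by
        rw [Measure.addHaar_closedBall' μ y hr.le, ENNReal.ofReal_mul (by positivity),
          ENNReal.ofReal_mul (by positivity), ENNReal.ofReal_mul (by positivity),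
          ENNReal.ofReal_toReal measure_closedBall_lt_top.ne]
        ring
    _ ≤ ENNReal.ofReal lam * μ (closedBall y r ∩ s) := by gcongr; exact hreg y hy r hr hrr₀
    _ ≤ μ.withDensity f (closedBall y r) :=
        mul_measure_inter_le_withDensity_apply hs measurableSet_closedBall hf

theorem mul_log_six_add_add_le {D L M : ℝ} (hD : 1 ≤ D) (hL : Real.log 2 ≤ L)
    (hM : Real.log 2 ≤ M) : D * Real.log 6 + M + L ≤ 10 * D * L * M := by
  have hlog2 := Real.log_two_gt_d9
  have hlog6 : Real.log 6 ≤ 3 * Real.log 2 := by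
    rw [← Real.log_rpow two_pos]; exact Real.log_le_log (by norm_num) (by norm_num)
  have hLM : Real.log 2 * Real.log 2 ≤ L * M := by gcongr; linarith
  -- `10 D L M ≥ 5 D (log 2)² + 5 L M`, with `5 (log 2)² ≥ 3 log 2 ≥ log 6`
  -- and `5 L M ≥ (5/2) log 2 (L + M) ≥ L + M`
  have h1 := mul_le_mul_of_nonneg_left hLM (by linarith : (0 : ℝ) ≤ D)
  have h2 := mul_nonneg (sub_nonneg.2 hD) (by nlinarith : 0 ≤ L * M)
  have h3 := mul_nonneg (by linarith : (0 : ℝ) ≤ D)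
    (mul_nonneg (by linarith : 0 ≤ Real.log 2) (by linarith : 0 ≤ 5 * Real.log 2 - 3))
  have h4 := mul_le_mul_of_nonneg_left hM (by linarith : 0 ≤ L)
  have h5 := mul_le_mul_of_nonneg_right hL (by linarith : 0 ≤ M)
  nlinarith

theorem six_pow_mul_exp_neg_div_le {D n : ℕ} {p q δ : ℝ} (hD : 1 ≤ D) (hn : 2 ≤ n)
    (hp1 : p ≤ 1) (hq : 0 < q) (hδ0 : 0 < δ) (hδ1 : δ < 1)
    (hnpq : n * (p * q) = 10 * D * Real.log (2 / δ) * Real.log n) :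
    6 ^ D * Real.exp (-(n * (p * q))) / q ≤ δ := by
  set L := Real.log (2 / δ)
  set M := Real.log n
  have hn0 : (0 : ℝ) < n := by exact_mod_cast (by omega : 0 < n)
  have hL : Real.log 2 ≤ L := Real.log_le_log two_pos ((le_div_iff₀ hδ0).2 (by linarith))
  have hM : Real.log 2 ≤ M := Real.log_le_log two_pos (by exact_mod_cast hn)
  have hbudget := mul_log_six_add_add_le (D := D) (by exact_mod_cast hD) hL hM
  have hpos : (0 : ℝ) < 6 ^ D * n * (2 / δ) := by positivity
  have hexp : 6 ^ D * n * (2 / δ) * Real.exp (-(10 * D * L * M)) ≤ 1 := by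
    rw [Real.exp_neg, ← div_eq_mul_inv, div_le_one (Real.exp_pos _), ← Real.exp_log hpos,
      Real.exp_le_exp, Real.log_mul (by positivity) (by positivity),
      Real.log_mul (by positivity) (by positivity), Real.log_pow]
    linarith
  have h6 : 0 ≤ D * Real.log 6 := mul_nonneg (by positivity) (Real.log_nonneg (by norm_num))
  have hK : 1 ≤ 10 * D * L * M := by linarith [Real.log_two_gt_d9]
  rw [hnpq, div_le_iff₀ hq]
  calc 6 ^ D * Real.exp (-(10 * D * L * M))
      = (δ / 2) * (6 ^ D * n * (2 / δ) * Real.exp (-(10 * D * L * M))) / n := by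
        field_simp
    _ ≤ (δ / 2) * 1 / n := by gcongr
    _ ≤ δ * q := by
        rw [div_le_iff₀ hn0]
        nlinarith [mul_le_mul_of_nonneg_left hp1 (by positivity : 0 ≤ δ * (q * n))]

def positiveSamples {E : Type*} {n : ℕ} (ω : Fin n → Bool × E) : Set E :=
  {z | ∃ j, (ω j).1 = true ∧ (ω j).2 = z}

theorem positiveSamples_subsingleton {E : Type*} (ω : Fin 1 → Bool × E) :
    (positiveSamples ω).Subsingleton := by
  rintro _ ⟨j, -, rfl⟩ _ ⟨j', -, rfl⟩
  rw [Subsingleton.elim j j']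

theorem measure_chainJoinedIn_ge {D : ℕ} {p : ℝ} (hp0 : 0 ≤ p) (hp1 : p ≤ 1)
    {Pp Pm : Measure (EuclideanSpace ℝ (Fin D))} [IsProbabilityMeasure Pp]
    [IsProbabilityMeasure Pm] {Xp : Set (EuclideanSpace ℝ (Fin D))} {ι : Type*}
    {A : ι → Set (EuclideanSpace ℝ (Fin D))} (hAXp : ∀ i, A i ⊆ Xp)
    (hA : ∀ i, IsPreconnected (A i)) {κ ρ r₀ : ℝ} (hκ : 0 < κ) (hρ : 0 < ρ) (hρr₀ : ρ < r₀)
    (hmass : ∀ y ∈ Xp, ∀ r, 0 < r → r < r₀ → ENNReal.ofReal (κ * r ^ D) ≤ Pp (closedBall y r))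
    (n : ℕ) :
    ENNReal.ofReal (1 - 6 ^ D * Real.exp (-(n * (p * (κ * ρ ^ D)))) / (κ * ρ ^ D)) ≤
      (Measure.pi fun _ : Fin n => mixture D p Pp Pm)
        {ω | ∀ i, ∀ x ∈ A i, ∀ x' ∈ A i, x ∈ positiveSamples ω → x' ∈ positiveSamples ω →
          ChainJoinedIn (positiveSamples ω) (3 * ρ) x x'} := by
  have := isProbabilityMeasure_mixture (D := D) (Pp := Pp) (Pm := Pm) hp0 hp1
  obtain ⟨Y, hYXp, hYnet, hYcard⟩ := exists_finset_subset_forall_dist_le_card_mul_le Pp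
    (A := Xp) (t := ρ / 3) (m := κ * (ρ / 6) ^ D) (by positivity) (by positivity)
    fun y hy => (hmass y hy _ (by positivity) (by linarith)).trans_eq (by norm_num [div_div])
  have hhit : ∀ y ∈ Y,
      ENNReal.ofReal (p * (κ * ρ ^ D)) ≤ mixture D p Pp Pm ({true} ×ˢ closedBall y ρ) :=
    fun y hy => by
      rw [mixture_singleton_true_prod, ENNReal.ofReal_mul hp0]
      gcongr
      exact hmass y (hYXp hy) ρ hρ hρr₀
  set e := Real.exp (-(n * (p * (κ * ρ ^ D))))
  calc ENNReal.ofReal (1 - 6 ^ D * e / (κ * ρ ^ D))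
      ≤ ENNReal.ofReal (1 - Y.card * e) := by
        gcongr
        rw [le_div_iff₀ (by positivity)]
        calc Y.card * e * (κ * ρ ^ D) = 6 ^ D * e * (Y.card * (κ * (ρ / 6) ^ D)) := by
              rw [div_pow]; field_simp
          _ ≤ 6 ^ D * e := mul_le_of_le_one_right (by positivity) hYcard
    _ ≤ (Measure.pi fun _ : Fin n => mixture D p Pp Pm)
          {ω | ∀ y ∈ Y, ∃ j, ω j ∈ ({true} : Set Bool) ×ˢ closedBall y ρ} :=
        measure_pi_forall_exists_mem_ge _ Y
          (fun _ => (measurableSet_singleton true).prod measurableSet_closedBall)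
          (by positivity) hhit n
    _ ≤ _ := by
        refine measure_mono fun ω hω i x hx x' hx' hxT hx'T => ?_
        have hnear : ∀ a ∈ A i, ∃ b ∈ positiveSamples ω, dist a b ≤ ρ / 3 + ρ := by
          intro a ha
          obtain ⟨y, hy, hay⟩ := hYnet a (hAXp i ha)
          obtain ⟨j, hj1, hj2⟩ := hω y hy
          exact ⟨(ω j).2, ⟨j, hj1, rfl⟩,
            (dist_triangle _ y _).trans (add_le_add hay (by rwa [dist_comm]))⟩
        exact (hA i).chainJoinedIn (by positivity) hnear (by linarith) hx hxT hx' hx'T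

/-- Connectedness lemma: there is a universal constant `C₀ > 0` such that under the
positive-class regularity assumptions, with `ε := 3(C₀ D log(2/δ) log n / (p C₊ λ₀ v_D n))^{1/D}`
and `n` large enough that `ε ≤ r₀`, with probability at least `1 - δ` over the i.i.d. labeled
sample of size `n`, for every connected component `𝒳₊,ᵢ` of `𝒳₊`, any two positive sample
points of `𝒳₊,ᵢ` are joined by an ε-chain of positive sample points. -/
theorem connectedness_of_positive_samples :
    ∃ C₀ : ℝ, 0 < C₀ ∧
      ∀ (D : ℕ), 1 ≤ D →
      ∀ (p : ℝ), 0 < p → p < 1 →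
      ∀ (Pp Pm : Measure (EuclideanSpace ℝ (Fin D))),
        IsProbabilityMeasure Pp → IsProbabilityMeasure Pm →
      ∀ (fp : EuclideanSpace ℝ (Fin D) → ENNReal), Pp = volume.withDensity fp →
      ∀ (Xp : Set (EuclideanSpace ℝ (Fin D))), IsCompact Xp → Pp Xp = 1 →
      ∀ (c : ℕ), 0 < c →
      ∀ (A : Fin c → Set (EuclideanSpace ℝ (Fin D))),
        (⋃ i, A i) = Xp →
        (∀ i, IsConnected (A i)) →
        Pairwise (Function.onFun Disjoint A) →
        (∀ i, ∀ T : Set (EuclideanSpace ℝ (Fin D)),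
          T ⊆ Xp → IsPreconnected T → A i ⊆ T → T ⊆ A i) →
      ∀ (lam0 r₀ Cp : ℝ), 0 < lam0 → 0 < r₀ → 0 < Cp →
        (∀ x ∈ Xp, ENNReal.ofReal lam0 ≤ fp x) →
        (∀ x ∈ Xp, ∀ r : ℝ, 0 < r → r < r₀ →
          ENNReal.ofReal Cp * volume (closedBall x r) ≤ volume (closedBall x r ∩ Xp)) →
      ∀ (δ : ℝ), 0 < δ → δ < 1 →
      ∀ (n : ℕ), 1 ≤ n →
      ∀ (ε : ℝ),
        ε = 3 * ((C₀ * D * Real.log (2 / δ) * Real.log n) /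
              (p * Cp * lam0 *
                (volume (closedBall (0 : EuclideanSpace ℝ (Fin D)) 1)).toReal * n))
            ^ (1 / (D : ℝ)) →
        ε ≤ r₀ →
        ENNReal.ofReal (1 - δ) ≤
          (Measure.pi fun _ : Fin n => mixture D p Pp Pm)
            {ω : Fin n → Bool × EuclideanSpace ℝ (Fin D) |
              ∀ i : Fin c, ∀ x ∈ A i, ∀ x' ∈ A i,
                (∃ j : Fin n, (ω j).1 = true ∧ (ω j).2 = x) →
                (∃ j : Fin n, (ω j).1 = true ∧ (ω j).2 = x') →
                ∃ k : ℕ, ∃ z : ℕ → EuclideanSpace ℝ (Fin D),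
                  z 0 = x ∧ z k = x' ∧
                  (∀ l ≤ k, ∃ j : Fin n, (ω j).1 = true ∧ (ω j).2 = z l) ∧
                  (∀ l < k, dist (z l) (z (l + 1)) ≤ ε)} := by
  refine ⟨10, by norm_num, ?_⟩
  intro D hD p hp0 hp1 Pp Pm _ _ fp hfp Xp hXp _ c _ A hAXp hA _ _ lam0 r₀ Cp hlam0 _ hCp hf hreg
    δ hδ0 hδ1 n hn ε hε hεr₀
  rcases hn.eq_or_lt with rfl | hn
  · have := isProbabilityMeasure_mixture (D := D) (Pp := Pp) (Pm := Pm) hp0.le hp1.le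
    refine (ENNReal.ofReal_le_one.2 (by linarith)).trans
      (measure_univ.symm.trans_le (measure_mono fun ω _ i x _ x' _ hx hx' => ?_))
    obtain rfl := positiveSamples_subsingleton ω hx hx'
    exact ChainJoinedIn.refl (T := positiveSamples ω) hx _
  set V := (volume (closedBall (0 : EuclideanSpace ℝ (Fin D)) 1)).toReal
  set K := 10 * D * Real.log (2 / δ) * Real.log n
  have hV : 0 < V := ENNReal.toReal_pos (measure_closedBall_pos _ _ one_pos).ne'
    measure_closedBall_lt_top.ne
  have hK : 0 < K := by
    have := Real.log_pos (by exact_mod_cast hn : (1 : ℝ) < n)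
    have := Real.log_pos ((lt_div_iff₀ hδ0).2 (by linarith) : (1 : ℝ) < 2 / δ)
    positivity
  obtain ⟨ρ, rfl⟩ : ∃ ρ, ε = 3 * ρ := ⟨ε / 3, by ring⟩
  have hρ : ρ = (K / (p * Cp * lam0 * V * n)) ^ (1 / (D : ℝ)) := by linarith
  have hρ0 : 0 < ρ := hρ ▸ by positivity
  have hρD : n * (p * (lam0 * Cp * V * ρ ^ D)) = K := by
    rw [hρ, one_div, Real.rpow_inv_natCast_pow (by positivity) (by omega)]
    field_simp
  have hmass := ofReal_mul_pow_le_withDensity_closedBall volume hXp.isClosed.measurableSet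
    hlam0.le hCp.le hf hreg
  rw [← hfp, finrank_euclideanSpace_fin] at hmass
  refine le_trans ?_ (measure_chainJoinedIn_ge hp0.le hp1.le (fun i => hAXp ▸ subset_iUnion A i)
    (fun i => (hA i).isPreconnected) (by positivity) hρ0 (by linarith) hmass n)
  gcongr
  exact six_pow_mul_exp_neg_div_le hD hn hp1.le (by positivity) hδ0 hδ1 hρD
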